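/- arXiv:1910.11649 — 3 statements merged into one kernel-verified Lean document; each statement's English description precedes it below -/
import Mathlib

section
/- The function f(t) = t(t+2)^3(2t+1)^3 / ((t^2+t+1)^2(t^2+7t+1)^2) is strictly monotonically increasing on the interval [t_3, 1], where t_3 = (11 + 9√2 - 3√(31 + 22√2))/2. -/
/-! In the factorization of `f'`, every factor other than `-2 (t - 1)` is positive for `t ≥ 0`,
so `f` increases strictly on all of `[0, 1]`; and `t3 ≈ 0.042` is positive. -/

noncomputable def t3 : ℝ := (11 + 9 * Real.sqrt 2 - 3 * Real.sqrt (31 + 22 * Real.sqrt 2)) / 2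

noncomputable def f (t : ℝ) : ℝ :=
  t * (t + 2) ^ 3 * (2 * t + 1) ^ 3 / ((t ^ 2 + t + 1) ^ 2 * (t ^ 2 + 7 * t + 1) ^ 2)

lemma t3_pos : 0 < t3 := by
  have hsq2 : Real.sqrt 2 ^ 2 = 2 := Real.sq_sqrt (by norm_num)
  have hlt : Real.sqrt (31 + 22 * Real.sqrt 2) < (11 + 9 * Real.sqrt 2) / 3 := by
    rw [Real.sqrt_lt' (by positivity)]
    nlinarith
  unfold t3
  linarith

lemma hasDerivAt_f {t : ℝ} (ht : t ^ 2 + 7 * t + 1 ≠ 0) :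
    HasDerivAt f
      (-2 * (t - 1) * (t + 1) * (t + 2) ^ 2 * (2 * t + 1) ^ 2 *
        (t ^ 4 + 2 * t ^ 3 + 21 * t ^ 2 + 2 * t + 1) /
        ((t ^ 2 + t + 1) ^ 3 * (t ^ 2 + 7 * t + 1) ^ 3)) t := by
  have hA : t ^ 2 + t + 1 ≠ 0 := by nlinarith [sq_nonneg (t + 1 / 2)]
  have hnum : HasDerivAt (fun t : ℝ => t * (t + 2) ^ 3 * (2 * t + 1) ^ 3)
      ((1 * (t + 2) ^ 3 + t * (3 * (t + 2) ^ 2 * 1)) * (2 * t + 1) ^ 3 +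
        t * (t + 2) ^ 3 * (3 * (2 * t + 1) ^ 2 * (2 * 1))) t :=
    ((hasDerivAt_id t).mul (((hasDerivAt_id t).add_const 2).pow 3)).mul
      ((((hasDerivAt_id t).const_mul 2).add_const 1).pow 3)
  have hden : HasDerivAt (fun t : ℝ => (t ^ 2 + t + 1) ^ 2 * (t ^ 2 + 7 * t + 1) ^ 2)
      (2 * (t ^ 2 + t + 1) ^ 1 * (2 * t ^ 1 + 1) * (t ^ 2 + 7 * t + 1) ^ 2 +
        (t ^ 2 + t + 1) ^ 2 * (2 * (t ^ 2 + 7 * t + 1) ^ 1 * (2 * t ^ 1 + 7 * 1))) t := by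
    have h₁ := ((hasDerivAt_pow 2 t).add (hasDerivAt_id t)).add_const 1
    have h₂ := ((hasDerivAt_pow 2 t).add ((hasDerivAt_id t).const_mul 7)).add_const 1
    simp only [Nat.cast_ofNat, Nat.add_one_sub_one, id] at h₁ h₂
    exact (h₁.pow 2).mul (h₂.pow 2)
  refine (hnum.div hden (by positivity)).congr_deriv ?_
  field_simp
  ring

lemma deriv_f_pos {t : ℝ} (h0 : 0 ≤ t) (h1 : t < 1) : 0 < deriv f t := by
  have hB : 0 < t ^ 2 + 7 * t + 1 := by positivity
  rw [(hasDerivAt_f hB.ne').deriv]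
  have h1' : 0 < -2 * (t - 1) := by linarith
  positivity

lemma f_strictMonoOn_Icc_zero_one : StrictMonoOn f (Set.Icc 0 1) := by
  refine strictMonoOn_of_deriv_pos (convex_Icc 0 1) (fun t ht => ?_) (fun t ht => ?_)
  · have hB : 0 < t ^ 2 + 7 * t + 1 := by nlinarith [ht.1]
    exact (hasDerivAt_f hB.ne').continuousAt.continuousWithinAt
  · rw [interior_Icc] at ht
    exact deriv_f_pos ht.1.le ht.2

theorem f_strictMonoOn : StrictMonoOn f (Set.Icc t3 1) :=
  f_strictMonoOn_Icc_zero_one.mono (Set.Icc_subset_Icc_left t3_pos.le)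
end

section
/- For every t in [t_3, 1], 1/4 ≤ f(t) ≤ 1, where f(t) = t(t+2)^3(2t+1)^3 / ((t^2+t+1)^2(t^2+7t+1)^2) and t_3 = (11 + 9√2 - 3√(31 + 22√2))/2. -/
set_option maxHeartbeats 1000000 in
theorem f_bounds : ∀ t ∈ Set.Icc t3 1, 1 / 4 ≤ f t ∧ f t ≤ 1 := by
  intro t ht
  obtain ⟨ht3, ht1⟩ := ht
  set s := Real.sqrt 2 with hs_def
  have hs2 : s ^ 2 = 2 := Real.sq_sqrt (by norm_num)
  have hs_pos : 0 < s := Real.sqrt_pos.mpr (by norm_num)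
  have h9s : 11 < 9 * s := by nlinarith [hs2, hs_pos]
  set u := Real.sqrt (31 + 22 * s) with hu_def
  have hu2 : u ^ 2 = 31 + 22 * s := Real.sq_sqrt (by nlinarith)
  have hu_pos : 0 < u := Real.sqrt_pos.mpr (by nlinarith)
  have ht3_def : t3 = (11 + 9 * s - 3 * u) / 2 := rfl
  have h3u : 3 * u < 11 + 9 * s := by nlinarith [hu2, hu_pos, hs2, hs_pos]
  have ht3_pos : 0 < t3 := by rw [ht3_def]; linarith
  have ht_pos : 0 < t := lt_of_lt_of_le ht3_pos ht3
  have htn : 0 ≤ t := ht_pos.le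
  have ht3_le1 : t3 ≤ 1 := by
    rw [ht3_def]
    nlinarith [hu2, hu_pos, hs2, hs_pos]
  -- t3 is a root of t^2 - (11+9s)t + 1
  have hg3 : t3 ^ 2 - (11 + 9 * s) * t3 + 1 = 0 := by
    rw [ht3_def]
    linear_combination (9 / 4) * hu2 - (81 / 4) * hs2
  -- g(t) ≤ 0 on [t3, 1]
  have hg : t ^ 2 - (11 + 9 * s) * t + 1 ≤ 0 := by
    have h1 : 0 ≤ t - t3 := by linarith
    have h2 : 0 ≤ 11 + 9 * s - t - t3 := by linarith
    nlinarith [mul_nonneg h1 h2, hg3]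
  have hb : (0:ℝ) < t ^ 2 + (9 * s - 11) * t + 1 := by nlinarith [sq_nonneg t]
  have hc : (0:ℝ) < t ^ 4 + 6 * t ^ 3 + 13 * t ^ 2 + 6 * t + 1 := by
    nlinarith [pow_nonneg htn 4, pow_nonneg htn 3, sq_nonneg t]
  have hD : (0:ℝ) < (t ^ 2 + t + 1) ^ 2 * (t ^ 2 + 7 * t + 1) ^ 2 := by
    have h1 : (0:ℝ) < t ^ 2 + t + 1 := by nlinarith [sq_nonneg t]
    have h2 : (0:ℝ) < t ^ 2 + 7 * t + 1 := by nlinarith [sq_nonneg t]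
    positivity
  set N := t * (t + 2) ^ 3 * (2 * t + 1) ^ 3 with hN_def
  set D := (t ^ 2 + t + 1) ^ 2 * (t ^ 2 + 7 * t + 1) ^ 2 with hD_def
  -- upper bound: N ≤ D
  have hsext : (0:ℝ) ≤ t ^ 6 + 10 * t ^ 5 + 41 * t ^ 4 + 58 * t ^ 3 + 41 * t ^ 2 + 10 * t + 1 := by
    nlinarith [pow_nonneg htn 6, pow_nonneg htn 5, pow_nonneg htn 4, pow_nonneg htn 3,
      sq_nonneg t, htn]
  have hNleD : N ≤ D := by
    have hEq : D - N = (t - 1) ^ 2 *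
        (t ^ 6 + 10 * t ^ 5 + 41 * t ^ 4 + 58 * t ^ 3 + 41 * t ^ 2 + 10 * t + 1) := by
      rw [hN_def, hD_def]; ring
    have h := mul_nonneg (sq_nonneg (t - 1)) hsext
    linarith [hEq, h]
  -- lower bound: D ≤ 4 N
  have hkey : 4 * N - D =
      (-(t ^ 2 - (11 + 9 * s) * t + 1)) * (t ^ 2 + (9 * s - 11) * t + 1) *
        (t ^ 4 + 6 * t ^ 3 + 13 * t ^ 2 + 6 * t + 1) := by
    rw [hN_def, hD_def]
    linear_combination (-81 * t ^ 2 * (t ^ 4 + 6 * t ^ 3 + 13 * t ^ 2 + 6 * t + 1)) * hs2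
  have hDle4N : D ≤ 4 * N := by
    have ha : (0:ℝ) ≤ -(t ^ 2 - (11 + 9 * s) * t + 1) := by linarith
    have := mul_nonneg (mul_nonneg ha hb.le) hc.le
    linarith [hkey ▸ this]
  have hf : f t = N / D := rfl
  constructor
  · rw [hf, le_div_iff₀ hD]
    linarith
  · rw [hf, div_le_one hD]
    exact hNleD
end

section
/- The matrix C_1 (the matrix C_t at t = 1) is equivalent, via conjugation by a positive diagonal matrix, to a symmetric 10×10 matrix of signature (4,1) on its column space; more precisely, there is a positive diagonal matrix D such that D C_1 D^{-1} is symmetric, and this symmetric matrix has rank 5 with 4 positive and 1 negative eigenvalue among its nonzero eigenvalues. -/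
noncomputable def g (p : ℕ) (t : ℝ) : ℝ :=
  2 * t ^ p * (t + 2) ^ p * (2 * t + 1) ^ (3 - p) / ((t ^ 2 + t + 1) * (t ^ 2 + 7 * t + 1))

noncomputable def gbar (p : ℕ) (t : ℝ) : ℝ := 4 * f t / g p t

noncomputable def h (t : ℝ) : ℝ :=
  2 + 1 / t + t * (t + 2) ^ 4 / ((t ^ 2 + t + 1) * (t ^ 2 + 7 * t + 1))

/-- The upper-left 5×5 block of the Cartan matrix `C_t`:
diagonal entries `2`, entry `-ḡ_{j-i-1}(t)` above and `-g_{i-j-1}(t)` below the diagonal. -/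
noncomputable def ULblock (t : ℝ) : Matrix (Fin 5) (Fin 5) ℝ := fun i j =>
  if i = j then 2
  else if i < j then -gbar ((j : ℕ) - (i : ℕ) - 1) t
  else -g ((i : ℕ) - (j : ℕ) - 1) t

/-- The lower-right 5×5 block of `C_t`: diagonal `2`, `-1/t` above, `-t` below the diagonal. -/
noncomputable def LRblock (t : ℝ) : Matrix (Fin 5) (Fin 5) ℝ := fun i j =>
  if i = j then 2
  else if i < j then -(1 / t)
  else -t

/-- The 10×10 Cartan matrix `C_t` from the paper, with rows and columns indexed by
`{1',…,5'} ⊕ {1,…,5}`.  The upper-right block is `-h(t)·Id` and the lower-left block `-2·Id`. -/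
noncomputable def C (t : ℝ) : Matrix (Fin 5 ⊕ Fin 5) (Fin 5 ⊕ Fin 5) ℝ :=
  Matrix.fromBlocks (ULblock t) (Matrix.diagonal fun _ => -h t)
    (Matrix.diagonal fun _ => -2) (LRblock t)

/-! At `t = 1` every `g_p` and `ḡ_p` equals `2` and `h = 6`, so each block of `C_1` has the form
`a • 1 + b • J` with `J` the all-ones `5 × 5` matrix. Conjugating by `diag(1, √3)` turns the
off-diagonal blocks `-6 • 1` and `-2 • 1` into `-2√3 • 1`, which makes the matrix symmetric.
Because these blocks commute and `J² = 5 • J`, a block computation gives `C_1³ + C_1² = 56 • C_1`,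
so every eigenvalue of the (similar) symmetric matrix lies in `{0, 7, -8}`. The trace is `20`,
so `20 = 7p - 8n` where `p` counts the positive and `n` the negative eigenvalues, and with
`p + n ≤ 10` this forces `p = 4`, `n = 1`; the rank is `p + n = 5`. -/

open Matrix Finset

open Polynomial in
theorem spectrum.isRoot_of_aeval_eq_zero {𝕜 A : Type*} [Field 𝕜] [Ring A] [Nontrivial A]
    [Algebra 𝕜 A] {a : A} {p : 𝕜[X]} (hp : aeval a p = 0) {μ : 𝕜} (hμ : μ ∈ spectrum 𝕜 a) :
    p.IsRoot μ := by
  have := spectrum.subset_polynomial_aeval a p ⟨μ, hμ, rfl⟩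
  rwa [hp, spectrum.zero_eq, Set.mem_singleton_iff] at this

namespace Matrix

theorem spectrum_conj {ι R : Type*} [Fintype ι] [DecidableEq ι] [CommRing R] {M : Matrix ι ι R}
    (hM : IsUnit M) (N : Matrix ι ι R) :
    spectrum R (M * N * M⁻¹) = spectrum R N := by
  rw [← hM.unit_spec, ← coe_units_inv, spectrum.units_conjugate]

theorem isHermitian_diagonal_mul_mul_inv {ι R : Type*} [Fintype ι] [DecidableEq ι] [Field R]
    [StarRing R] [TrivialStar R] {d : ι → R} (hd : ∀ i, d i ≠ 0) {K : Matrix ι ι R}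
    (hK : ∀ i j, d i ^ 2 * K i j = d j ^ 2 * K j i) :
    (diagonal d * K * (diagonal d)⁻¹).IsHermitian := by
  have hinv : (diagonal d)⁻¹ = diagonal d⁻¹ := inv_eq_right_inv <| by
    rw [diagonal_mul_diagonal, ← diagonal_one]
    exact congrArg diagonal (funext fun i => mul_inv_cancel₀ (hd i))
  ext i j
  simp only [hinv, conjTranspose_apply, star_trivial, mul_diagonal, diagonal_mul, Pi.inv_apply]
  field_simp [hd i, hd j]
  linear_combination (hK i j).symm

theorem trace_fromBlocks {m n R : Type*} [Fintype m] [Fintype n] [AddCommMonoid R]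
    (A : Matrix m m R) (B : Matrix m n R) (C : Matrix n m R) (D : Matrix n n R) :
    (fromBlocks A B C D).trace = A.trace + D.trace := by
  simp [trace, Fintype.sum_sum_type]

def allOnes (ι R : Type*) [One R] : Matrix ι ι R := of fun _ _ => 1

theorem allOnes_mul_allOnes {ι R : Type*} [Fintype ι] [CommRing R] :
    allOnes ι R * allOnes ι R = (Fintype.card ι : R) • allOnes ι R := by
  ext i j
  simp [allOnes, mul_apply]

variable {ι R : Type*} [DecidableEq ι] [CommRing R]

def scalarAddOnes (a b : R) : Matrix ι ι R := a • 1 + b • allOnes ι R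

theorem scalarAddOnes_apply (a b : R) (i j : ι) :
    scalarAddOnes a b i j = if i = j then a + b else b := by
  by_cases h : i = j <;> simp [scalarAddOnes, allOnes, h]

theorem scalarAddOnes_mul [Fintype ι] (a b c d : R) :
    scalarAddOnes a b * scalarAddOnes c d =
      (scalarAddOnes (a * c) (a * d + b * c + Fintype.card ι * b * d) : Matrix ι ι R) := by
  simp only [scalarAddOnes, add_mul, mul_add, smul_mul_assoc, mul_smul_comm, allOnes_mul_allOnes,
    one_mul, mul_one, smul_smul]
  module

theorem scalarAddOnes_add (a b c d : R) :
    scalarAddOnes a b + scalarAddOnes c d = (scalarAddOnes (a + c) (b + d) : Matrix ι ι R) := by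
  simp only [scalarAddOnes]; module

theorem smul_scalarAddOnes (r a b : R) :
    r • scalarAddOnes a b = (scalarAddOnes (r * a) (r * b) : Matrix ι ι R) := by
  simp only [scalarAddOnes]; module

theorem trace_scalarAddOnes [Fintype ι] (a b : R) :
    (scalarAddOnes a b : Matrix ι ι R).trace = Fintype.card ι * (a + b) := by
  simp [trace, scalarAddOnes_apply, mul_add]

end Matrix

theorem g_one {p : ℕ} (hp : p ≤ 3) : g p 1 = 2 := by
  have h3 : (3 : ℝ) ^ p * 3 ^ (3 - p) = 27 := by
    rw [← pow_add, Nat.add_sub_cancel' hp]; norm_num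
  simp only [g]
  norm_num [mul_assoc, h3]

theorem gbar_one {p : ℕ} (hp : p ≤ 3) : gbar p 1 = 2 := by
  rw [gbar, g_one hp]; norm_num [f]

theorem h_one : h 1 = 6 := by norm_num [h]

theorem ULblock_one : ULblock 1 = scalarAddOnes 4 (-2) := by
  ext i j
  rw [ULblock, scalarAddOnes_apply]
  split_ifs with hij hlt
  · norm_num
  · rw [gbar_one (by omega)]
  · rw [g_one (by omega)]

theorem LRblock_one : LRblock 1 = scalarAddOnes 3 (-1) := by
  ext i j
  rw [LRblock, scalarAddOnes_apply]
  split_ifs <;> norm_num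

theorem C_one_eq : C 1 = fromBlocks (scalarAddOnes 4 (-2)) (scalarAddOnes (-6) 0)
    (scalarAddOnes (-2) 0) (scalarAddOnes 3 (-1)) := by
  have hdiag (a : ℝ) : diagonal (fun _ : Fin 5 => a) = scalarAddOnes a 0 := by
    ext i j
    rw [diagonal_apply, scalarAddOnes_apply, add_zero]
  rw [C, ULblock_one, LRblock_one, h_one, hdiag, hdiag]

theorem C_one_cubic : C 1 ^ 3 + C 1 ^ 2 = (56 : ℝ) • C 1 := by
  simp only [C_one_eq, pow_succ, pow_zero, one_mul, fromBlocks_multiply, scalarAddOnes_mul,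
    scalarAddOnes_add, fromBlocks_smul, smul_scalarAddOnes, fromBlocks_add, Fintype.card_fin]
  norm_num

theorem spectrum_C_one_subset : spectrum ℝ (C 1) ⊆ {0, 7, -8} := by
  intro μ hμ
  have hroot := spectrum.isRoot_of_aeval_eq_zero
    (p := Polynomial.X ^ 3 + Polynomial.X ^ 2 - (56 : ℝ) • Polynomial.X)
    (by simp [C_one_cubic]) hμ
  have : μ * ((μ - 7) * (μ + 8)) = 0 := by
    simp only [Polynomial.IsRoot, Polynomial.eval_sub, Polynomial.eval_add, Polynomial.eval_pow,
      Polynomial.eval_X, Polynomial.eval_smul, smul_eq_mul] at hroot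
    linear_combination hroot
  rcases mul_eq_zero.1 this with h0 | h78
  · simp [h0]
  rcases mul_eq_zero.1 h78 with h7 | h8
  · simp [sub_eq_zero.1 h7]
  · simp [eq_neg_of_add_eq_zero_left h8]

theorem trace_C_one : (C 1).trace = 20 := by
  rw [C_one_eq, trace_fromBlocks, trace_scalarAddOnes, trace_scalarAddOnes]
  norm_num

theorem C_one_symmetrizable (i j : Fin 5 ⊕ Fin 5) :
    Sum.elim (fun _ => 1) (fun _ => √3) i ^ 2 * C 1 i j =
      Sum.elim (fun _ => 1) (fun _ => √3) j ^ 2 * C 1 j i := by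
  rcases i with i | i <;> rcases j with j | j <;>
    norm_num [C_one_eq, scalarAddOnes_apply, eq_comm]

section Counting

variable {ι : Type*} [Fintype ι]

theorem Finset.card_filter_ne_zero_eq_add [DecidableEq ι] {α : Type*} [LinearOrder α] [Zero α]
    (μ : ι → α) :
    #{i | μ i ≠ 0} = #{i | 0 < μ i} + #{i | μ i < 0} := by
  rw [← card_union_of_disjoint (disjoint_filter.2 fun i _ hpos hneg => hpos.not_gt hneg),
    ← filter_or]
  simp only [ne_iff_lt_or_gt, or_comm]

theorem Finset.sum_eq_mul_card_pos_add_mul_card_neg {μ : ι → ℝ} {a b : ℝ} (ha : 0 < a)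
    (hb : b < 0) (hμ : ∀ i, μ i = 0 ∨ μ i = a ∨ μ i = b) :
    ∑ i, μ i = a * #{i | 0 < μ i} + b * #{i | μ i < 0} := by
  have hsplit (i : ι) : μ i = (if 0 < μ i then a else 0) + (if μ i < 0 then b else 0) := by
    rcases hμ i with h | h | h <;> simp [h, ha, hb, ha.not_gt, hb.not_gt]
  rw [sum_congr rfl fun i _ => hsplit i, sum_add_distrib, sum_ite, sum_ite]
  simp [mul_comm]

theorem card_pos_eq_four_and_card_neg_eq_one [DecidableEq ι] (hι : Fintype.card ι ≤ 10)
    {μ : ι → ℝ} (hμ : ∀ i, μ i = 0 ∨ μ i = 7 ∨ μ i = -8) (hsum : ∑ i, μ i = 20) :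
    #{i | 0 < μ i} = 4 ∧ #{i | μ i < 0} = 1 := by
  rw [sum_eq_mul_card_pos_add_mul_card_neg (by norm_num) (by norm_num) hμ] at hsum
  have hcard : #{i | 0 < μ i} + #{i | μ i < 0} ≤ 10 :=
    card_filter_ne_zero_eq_add μ ▸ (card_filter_le _ _).trans hι
  have : 7 * #{i | 0 < μ i} = 20 + 8 * #{i | μ i < 0} := by
    exact_mod_cast (by linarith : (7 * #{i | 0 < μ i} : ℝ) = 20 + 8 * #{i | μ i < 0})
  omega

end Counting

open scoped Classical in
theorem C_one_signature :
    ∃ d : Fin 5 ⊕ Fin 5 → ℝ, (∀ i, 0 < d i) ∧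
      ∃ hS : (Matrix.diagonal d * C 1 * (Matrix.diagonal d)⁻¹).IsHermitian,
        (Matrix.diagonal d * C 1 * (Matrix.diagonal d)⁻¹).rank = 5 ∧
          (Finset.univ.filter fun i => 0 < hS.eigenvalues i).card = 4 ∧
          (Finset.univ.filter fun i => hS.eigenvalues i < 0).card = 1 := by
  set d : Fin 5 ⊕ Fin 5 → ℝ := Sum.elim (fun _ => 1) fun _ => √3
  have hd : ∀ i, 0 < d i := by rintro (i | i) <;> simp [d]
  have hD : IsUnit (diagonal d) := isUnit_diagonal.2 (Pi.isUnit_iff.2 fun i => (hd i).ne'.isUnit)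
  have hS := isHermitian_diagonal_mul_mul_inv (fun i => (hd i).ne') C_one_symmetrizable
  refine ⟨d, hd, hS, ?_⟩
  have hμ (i : Fin 5 ⊕ Fin 5) : hS.eigenvalues i = 0 ∨ hS.eigenvalues i = 7 ∨
      hS.eigenvalues i = -8 :=
    spectrum_C_one_subset (spectrum_conj hD (C 1) ▸ hS.eigenvalues_mem_spectrum_real i)
  have hsum : ∑ i, hS.eigenvalues i = 20 := by
    simpa [trace_conj hD, trace_C_one] using hS.trace_eq_sum_eigenvalues.symm
  have hcounts := card_pos_eq_four_and_card_neg_eq_one (by simp) hμ hsum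
  refine ⟨?_, hcounts⟩
  rw [hS.rank_eq_card_non_zero_eigs, Fintype.card_subtype, card_filter_ne_zero_eq_add,
    hcounts.1, hcounts.2]
end
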